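/- Let d ≥ 2 and Λ ⊂ ℤ^d be finite, V = {v_1,…,v_k} ⊆ Λ^in, and η, η' : V → E_o. Then the pinned and Dirichlet unnormalized fermionic Gaussian free field states agree on gradient observables: (∏_{v∈Λ∪{g}} ∂_{ψ̄_v}∂_{ψ_v}) ψ_g ψ̄_g exp(∑_{u,v∈Λ∪{g}} ψ_u(−Δ^g)(u,v)ψ̄_v + ψ_gψ̄_g) ∏_{j=1}^k ∇_{η(v_j)}ψ(v_j) ∇_{η'(v_j)}ψ̄(v_j) = (∏_{v∈Λ} ∂_{ψ̄_v}∂_{ψ_v}) exp(∑_{u,v∈Λ} ψ_u(−Δ_Λ)(u,v)ψ̄_v) ∏_{j=1}^k ∇_{η(v_j)}ψ(v_j) ∇_{η'(v_j)}ψ̄(v_j). -/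

import Mathlib

/-!
Common setup: the hypercubic lattice ℤ^d, its Laplacian, Green's function, discrete
gradients; the Grassmann algebra with generators `ψ_v, ψ̄_v` indexed by lattice points
and a ghost vertex (`Option` with `none` = ghost), realized as an exterior algebra;
left derivatives as contractions; Berezin integrals; the (un)normalized Dirichlet
fermionic Gaussian free field state; fields X, Y; wired spanning trees; cumulants.
Products of (mathematically commuting) elements over a `Finset` are taken in the
arbitrary-but-fixed order provided by `Finset.toList`, and sums over collections that
are finite but not packaged as `Finset`s are `finsum`s.
-/

noncomputable section
open scoped BigOperators

namespace Sandpile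

variable (d : ℕ)

/-- Vertices of ℤ^d. -/
abbrev Vtx := Fin d → ℤ

/-- The `2d` coordinate directions `e_1,…,e_d,−e_1,…,−e_d`. -/
def Eo : Finset (Vtx d) :=
  (Finset.univ.image fun i : Fin d => Pi.single i (1 : ℤ)) ∪
    (Finset.univ.image fun i : Fin d => Pi.single i (-1 : ℤ))

/-- Nearest-neighbor adjacency in ℤ^d. -/
def adj (u v : Vtx d) : Prop := u - v ∈ Eo d

instance : DecidablePred fun p : Vtx d × Vtx d => adj d p.1 p.2 := fun _ => by
  unfold adj; infer_instance

instance (u v : Vtx d) : Decidable (adj d u v) := by unfold adj; infer_instance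

/-- Exterior boundary `∂^ex Λ`. -/
def extBdry (Λ : Finset (Vtx d)) : Set (Vtx d) :=
  {u | u ∉ Λ ∧ ∃ v ∈ Λ, adj d u v}

/-- Interior `Λ^in = Λ ∖ ∂^in Λ`: the points of `Λ` all of whose neighbors lie in `Λ`. -/
def interior (Λ : Finset (Vtx d)) : Set (Vtx d) :=
  {u | u ∈ Λ ∧ ∀ v, adj d u v → v ∈ Λ}

/-- The entries of `−Δ_Λ` (for `u, v` ranging over `Λ`): the matrix of the negative
Laplacian, `2d` on the diagonal, `−1` between nearest neighbors, `0` otherwise. -/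
def negLap (u v : Vtx d) : ℝ := if u = v then (2 * d : ℝ) else if adj d u v then -1 else 0

/-- The matrix `−Δ_Λ`. -/
def lapM (Λ : Finset (Vtx d)) : Matrix {x // x ∈ Λ} {x // x ∈ Λ} ℝ :=
  fun u v => negLap d u v

/-- The Green's function `G_Λ = (−Δ_Λ)⁻¹`, extended by `0` to ℤ^d × ℤ^d. -/
def green (Λ : Finset (Vtx d)) (u v : Vtx d) : ℝ :=
  if h : u ∈ Λ ∧ v ∈ Λ then (lapM d Λ)⁻¹ ⟨u, h.1⟩ ⟨v, h.2⟩ else 0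

/-- Discrete double gradient `∇^{(1)}_e ∇^{(2)}_{e'} G (u,v)`. -/
def dgrad (G : Vtx d → Vtx d → ℝ) (e e' u v : Vtx d) : ℝ :=
  G (u + e) (v + e') - G (u + e) v - G u (v + e') + G u v

/-- A good set: no two vertices are nearest neighbors, and every other site of `Λ` is
joined to `∂^ex Λ` by a nearest-neighbor path avoiding `V` (through `Λ^g`). -/
def goodSet (Λ V : Finset (Vtx d)) : Prop :=
  (∀ u ∈ V, ∀ v ∈ V, ¬adj d u v) ∧
    ∀ w ∈ Λ, w ∉ V →
      ∃ b ∈ extBdry d Λ,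
        (SimpleGraph.fromRel fun x y =>
            adj d x y ∧ (x ∈ (↑Λ : Set (Vtx d)) ∪ extBdry d Λ) ∧
              (y ∈ (↑Λ : Set (Vtx d)) ∪ extBdry d Λ) ∧ x ∉ V ∧ y ∉ V).Reachable w b

/-! ### The Grassmann algebra over `Λ ∪ {ghost}` -/

/-- Lattice vertices together with the ghost vertex (`none`). -/
abbrev GVtx := Option (Vtx d)

/-- The Grassmann algebra generated by `ψ_u` (`Sum.inl`) and `ψ̄_u` (`Sum.inr`). -/
abbrev GA := ExteriorAlgebra ℝ ((GVtx d ⊕ GVtx d) → ℝ)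

/-- The generator `ψ_u`. -/
def psi (u : GVtx d) : GA d := ExteriorAlgebra.ι ℝ (Pi.single (Sum.inl u) 1)

/-- The generator `ψ̄_u`. -/
def psibar (u : GVtx d) : GA d := ExteriorAlgebra.ι ℝ (Pi.single (Sum.inr u) 1)

/-- Left derivative w.r.t. the generator indexed by `x` (contraction with the
dual-basis functional). -/
def der (x : GVtx d ⊕ GVtx d) : Module.End ℝ (GA d) :=
  CliffordAlgebra.contractLeft (LinearMap.proj x)

/-- `∂_{ψ̄_u} ∂_{ψ_u}`. -/
def D (u : GVtx d) : Module.End ℝ (GA d) := der d (Sum.inr u) * der d (Sum.inl u)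

/-- The Berezin integral `∏_{u ∈ S} ∂_{ψ̄_u}∂_{ψ_u}`; the factors pairwise commute, so
the order (here the one provided by `Finset.toList`) is immaterial. -/
def berezin (S : Finset (GVtx d)) : Module.End ℝ (GA d) :=
  (S.toList.map fun u => D d u).prod

/-- `exp` of a Grassmann element: `∑_{k≥0} F^k/k!`, a finite sum for nilpotent `F`. -/
def gexp (F : GA d) : GA d := ∑ᶠ k : ℕ, (k.factorial : ℝ)⁻¹ • F ^ k

/-- The quadratic form `∑_{u,v ∈ Λ} ψ_u (−Δ_Λ)(u,v) ψ̄_v`. -/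
def dirQuad (Λ : Finset (Vtx d)) : GA d :=
  ∑ u ∈ Λ, ∑ v ∈ Λ, negLap d u v • (psi d (some u) * psibar d (some v))

/-- The unnormalized Dirichlet fGFF state, as an element of the Grassmann algebra. -/
def dstate (Λ : Finset (Vtx d)) (F : GA d) : GA d :=
  berezin d (Λ.image some) (gexp d (dirQuad d Λ) * F)

/-- The unnormalized Dirichlet fGFF state as a real number (the result of the full
Berezin integral is a scalar; `algebraMapInv` extracts it). -/
def dstateR (Λ : Finset (Vtx d)) (F : GA d) : ℝ :=
  ExteriorAlgebra.algebraMapInv (dstate d Λ F)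

/-- The normalized Dirichlet fGFF state `⟨⟨F⟩⟩_Λ = ⟨F⟩⁰_Λ / det(−Δ_Λ)`. -/
def nstate (Λ : Finset (Vtx d)) (F : GA d) : ℝ :=
  dstateR d Λ F / (lapM d Λ).det

/-- `∇_e ψ(v) = ψ_{v+e} − ψ_v`. -/
def gradPsi (v e : Vtx d) : GA d := psi d (some (v + e)) - psi d (some v)

/-- `∇_e ψ̄(v) = ψ̄_{v+e} − ψ̄_v`. -/
def gradPsibar (v e : Vtx d) : GA d := psibar d (some (v + e)) - psibar d (some v)

/-- The gradient-squared field `X_v = (2d)⁻¹ ∑_{e ∈ E_o} ∇_eψ(v) ∇_eψ̄(v)`. -/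
def X (v : Vtx d) : GA d :=
  (2 * d : ℝ)⁻¹ • ∑ e ∈ Eo d, gradPsi d v e * gradPsibar d v e

/-- The auxiliary field `Y_v = ∏_{e ∈ E_o} (1 − ∇_eψ(v) ∇_eψ̄(v))` (commuting factors,
taken in the `Finset.toList` order). -/
def Y (v : Vtx d) : GA d :=
  ((Eo d).toList.map fun e => 1 - gradPsi d v e * gradPsibar d v e).prod

/-- The product `∏_{v ∈ B} W_v` of (mathematically commuting) observables, taken in the
`Finset.toList` order. -/
def prodOver {α : Type*} (B : Finset α) (W : α → GA d) : GA d := (B.toList.map W).prod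

/-- Joint cumulants of the family `(W_v)_{v ∈ V}` with respect to the normalized
Dirichlet fGFF state. -/
def cumul (Λ V : Finset (Vtx d)) (W : Vtx d → GA d) : ℝ :=
  ∑ᶠ π : Finpartition V,
    ((π.parts.card - 1).factorial : ℝ) * (-1 : ℝ) ^ (π.parts.card - 1) *
      ∏ B ∈ π.parts, nstate d Λ (prodOver d B W)

/-! ### Wired spanning trees -/

/-- A wired spanning tree of `Λ`: a set of unordered nearest-neighbor edges, each with
an endpoint in `Λ`, of cardinality `|Λ|`, joining every vertex of `Λ` to `∂^ex Λ`. -/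
def IsWST (Λ : Finset (Vtx d)) (T : Finset (Sym2 (Vtx d))) : Prop :=
  (∀ e ∈ T, ∃ u v : Vtx d, e = s(u, v) ∧ adj d u v ∧ (u ∈ Λ ∨ v ∈ Λ)) ∧
    T.card = Λ.card ∧
      ∀ w ∈ Λ, ∃ b ∈ extBdry d Λ,
        (SimpleGraph.fromEdgeSet (↑T : Set (Sym2 (Vtx d)))).Reachable w b

/-- Probability of an event under the uniform measure on wired spanning trees. -/
def probWST (Λ : Finset (Vtx d)) (A : Finset (Sym2 (Vtx d)) → Prop) : ℝ :=
  ({T | IsWST d Λ T ∧ A T}.ncard : ℝ) / ({T | IsWST d Λ T}.ncard : ℝ)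

/-- Expectation under the uniform measure on wired spanning trees. -/
def expWST (Λ : Finset (Vtx d)) (φ : Finset (Sym2 (Vtx d)) → ℝ) : ℝ :=
  (∑ᶠ T ∈ {T | IsWST d Λ T}, φ T) / ({T | IsWST d Λ T}.ncard : ℝ)

/-- Joint cumulants of real observables under the uniform wired-spanning-tree measure. -/
def cumulWST (Λ V : Finset (Vtx d)) (W : Vtx d → Finset (Sym2 (Vtx d)) → ℝ) : ℝ :=
  ∑ᶠ π : Finpartition V,
    ((π.parts.card - 1).factorial : ℝ) * (-1 : ℝ) ^ (π.parts.card - 1) *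
      ∏ B ∈ π.parts, expWST d Λ fun T => ∏ v ∈ B, W v T

/-- The degree of `v` in the edge set `T`. -/
def degT (T : Finset (Sym2 (Vtx d))) (v : Vtx d) : ℕ := (T.filter fun e => v ∈ e).card

end Sandpile

namespace Sandpile

variable (d : ℕ)

/-- The number of neighbors of `u` lying in `∂^ex Λ`, i.e. `|{w ∈ ∂^ex Λ : w ∼ u}|`. -/
def extNbrCount (Λ : Finset (Vtx d)) (u : Vtx d) : ℕ :=
  ((((Eo d).image fun e => u + e)).filter fun w => w ∉ Λ).card

/-- The interior boundary `∂^in Λ`. -/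
def inBdry (Λ : Finset (Vtx d)) : Finset (Vtx d) :=
  Λ.filter fun u => ∃ e ∈ Eo d, u + e ∉ Λ

/-- The entries of `−Δ^g` over `Λ ∪ {g}` (`none` is the ghost `g`):
`Δ^g(u,v) = Δ_Λ(u,v)` on `Λ×Λ`, `Δ^g(u,g) = Δ^g(g,u) = |{w ∈ ∂^exΛ : w ∼ u}|`,
and `Δ^g(g,g) = −|∂^in Λ|`. -/
def negLapG (Λ : Finset (Vtx d)) : GVtx d → GVtx d → ℝ
  | some u, some v => negLap d u v
  | some u, none => -(extNbrCount d Λ u : ℝ)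
  | none, some v => -(extNbrCount d Λ v : ℝ)
  | none, none => (inBdry d Λ).card

/-- `Λ^g = Λ ∪ {g}`. -/
def wiredSet (Λ : Finset (Vtx d)) : Finset (GVtx d) := insert none (Λ.image some)

/-- The quadratic form `∑_{u,v ∈ Λ^g} ψ_u (−Δ^g)(u,v) ψ̄_v`. -/
def pinQuad (Λ : Finset (Vtx d)) : GA d :=
  ∑ u ∈ wiredSet d Λ, ∑ v ∈ wiredSet d Λ,
    negLapG d Λ u v • (psi d u * psibar d v)

/-- The unnormalized *pinned* fGFF state, as an element of the Grassmann algebra. -/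
def pstate (Λ : Finset (Vtx d)) (F : GA d) : GA d :=
  berezin d (wiredSet d Λ)
    (psi d none * psibar d none *
      gexp d (pinQuad d Λ + psi d none * psibar d none) * F)




/-- The underlying module of the Grassmann algebra. -/
abbrev MM := (GVtx d ⊕ GVtx d) → ℝ

open ExteriorAlgebra CliffordAlgebra

/-! ### Generalities in rings -/

lemma swap_mul' {A : Type*} [Ring A] {x y : A} (h : x * y = -(y * x)) (z : A) :
    x * (y * z) = -(y * (x * z)) := by
  rw [← mul_assoc, h, neg_mul, mul_assoc]

lemma pair_comm' {A : Type*} [Ring A] {a b c e : A}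
    (hac : a * c = -(c * a)) (hae : a * e = -(e * a))
    (hbc : b * c = -(c * b)) (hbe : b * e = -(e * b)) :
    a * b * (c * e) = c * e * (a * b) :=
  calc a * b * (c * e) = a * (b * (c * e)) := by rw [mul_assoc]
    _ = a * (-(c * (b * e))) := by rw [swap_mul' hbc]
    _ = c * (a * (b * e)) := by rw [mul_neg, swap_mul' hac, neg_neg]
    _ = c * (a * (-(e * b))) := by rw [hbe]
    _ = c * (e * (a * b)) := by rw [mul_neg, swap_mul' hae, neg_neg]
    _ = c * e * (a * b) := by rw [mul_assoc]

lemma add_pow_eq_zero' {A : Type*} [Ring A] {x y : A} (hx : x * x = 0)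
    (h : Commute x y) {n : ℕ} (hy : y ^ n = 0) : (x + y) ^ (n + 1) = 0 := by
  rw [h.add_pow]
  apply Finset.sum_eq_zero
  intro i _
  match i with
  | 0 => simp [pow_succ, hy]
  | 1 => simp [hy]
  | (k + 2) =>
    have hxk : x ^ (k + 2) = x ^ k * (x * x) := by
      rw [pow_succ, pow_succ, mul_assoc]
    simp [hxk, hx]

lemma pow_zero_of_le' {A : Type*} [Ring A] {x : A} {N k : ℕ} (hN : x ^ N = 0)
    (hk : N ≤ k) : x ^ k = 0 := by
  rw [← Nat.sub_add_cancel hk, pow_add, hN, mul_zero]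

/-! ### Grassmann generators -/

lemma gen_swap (x y : MM d) :
    ExteriorAlgebra.ι ℝ x * ExteriorAlgebra.ι ℝ y
      = -(ExteriorAlgebra.ι ℝ y * ExteriorAlgebra.ι ℝ x) :=
  eq_neg_of_add_eq_zero_left (ι_add_mul_swap x y)

lemma quad_mul_quad_zero {a c : MM d} (b e : MM d) (h : a = c ∨ b = e) :
    (ExteriorAlgebra.ι ℝ a * ExteriorAlgebra.ι ℝ b) *
      (ExteriorAlgebra.ι ℝ c * ExteriorAlgebra.ι ℝ e) = 0 := by
  rcases h with rfl | rfl
  · rw [mul_assoc, swap_mul' (gen_swap d b a)]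
    simp [← mul_assoc, ι_sq_zero]
  · rw [mul_assoc, swap_mul' (gen_swap d b c)]
    simp [ι_sq_zero]

/-- Degree-two monomials. -/
def IsM2 (x : GA d) : Prop :=
  ∃ (r : ℝ) (a b : MM d), x = r • (ExteriorAlgebra.ι ℝ a * ExteriorAlgebra.ι ℝ b)

lemma IsM2.sq_zero {x : GA d} (hx : IsM2 d x) : x * x = 0 := by
  obtain ⟨r, a, b, rfl⟩ := hx
  rw [smul_mul_assoc, mul_smul_comm, quad_mul_quad_zero d b b (Or.inl rfl),
    smul_zero, smul_zero]

lemma IsM2.commute {x y : GA d} (hx : IsM2 d x) (hy : IsM2 d y) : Commute x y := by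
  obtain ⟨r, a, b, rfl⟩ := hx
  obtain ⟨s, c, e, rfl⟩ := hy
  exact Commute.smul_left (Commute.smul_right
    (pair_comm' (gen_swap d a c) (gen_swap d a e) (gen_swap d b c) (gen_swap d b e)) s) r

lemma isM2_term (c : ℝ) (u v : GVtx d) : IsM2 d (c • (psi d u * psibar d v)) :=
  ⟨c, _, _, rfl⟩

lemma isM2_P : IsM2 d (psi d none * psibar d none) :=
  ⟨1, _, _, (one_smul _ _).symm⟩

/-! ### Nilpotency -/

lemma sum_m2_pow_zero {ι : Type*} (s : Finset ι) (f : ι → GA d)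
    (h : ∀ i ∈ s, IsM2 d (f i)) : (∑ i ∈ s, f i) ^ (s.card + 1) = 0 := by
  classical
  induction s using Finset.induction_on with
  | empty => simp
  | insert a s ha ih =>
    rw [Finset.sum_insert ha, Finset.card_insert_of_notMem ha]
    exact add_pow_eq_zero' ((h a (Finset.mem_insert_self a s)).sq_zero d)
      (Commute.sum_right _ _ _ fun i hi =>
        ((h a (Finset.mem_insert_self a s)).commute d (h i (Finset.mem_insert_of_mem hi))))
      (ih fun i hi => h i (Finset.mem_insert_of_mem hi))

lemma dirQuad_eq_sum (Λ : Finset (Vtx d)) :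
    dirQuad d Λ = ∑ p ∈ Λ ×ˢ Λ, negLap d p.1 p.2 • (psi d (some p.1) * psibar d (some p.2)) := by
  unfold dirQuad; rw [Finset.sum_product]

lemma pinQuad_eq_sum (Λ : Finset (Vtx d)) :
    pinQuad d Λ = ∑ p ∈ wiredSet d Λ ×ˢ wiredSet d Λ,
      negLapG d Λ p.1 p.2 • (psi d p.1 * psibar d p.2) := by
  unfold pinQuad; rw [Finset.sum_product]

lemma dirQuad_pow_zero (Λ : Finset (Vtx d)) :
    (dirQuad d Λ) ^ ((Λ ×ˢ Λ).card + 1) = 0 := by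
  rw [dirQuad_eq_sum]
  exact sum_m2_pow_zero d _ _ fun p _ => isM2_term d _ _ _

lemma pinQuad_pow_zero (Λ : Finset (Vtx d)) :
    (pinQuad d Λ) ^ ((wiredSet d Λ ×ˢ wiredSet d Λ).card + 1) = 0 := by
  rw [pinQuad_eq_sum]
  exact sum_m2_pow_zero d _ _ fun p _ => isM2_term d _ _ _

lemma commute_dirQuad {x : GA d} (hx : IsM2 d x) (Λ : Finset (Vtx d)) :
    Commute x (dirQuad d Λ) := by
  rw [dirQuad_eq_sum]
  exact Commute.sum_right _ _ _ fun p _ => hx.commute d (isM2_term d _ _ _)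

lemma commute_pinQuad {x : GA d} (hx : IsM2 d x) (Λ : Finset (Vtx d)) :
    Commute x (pinQuad d Λ) := by
  rw [pinQuad_eq_sum]
  exact Commute.sum_right _ _ _ fun p _ => hx.commute d (isM2_term d _ _ _)

lemma pinP_pow_zero (Λ : Finset (Vtx d)) :
    (pinQuad d Λ + psi d none * psibar d none) ^
      ((wiredSet d Λ ×ˢ wiredSet d Λ).card + 1 + 1) = 0 := by
  rw [add_comm]
  exact add_pow_eq_zero' ((isM2_P d).sq_zero d) (commute_pinQuad d (isM2_P d) Λ)
    (pinQuad_pow_zero d Λ)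

/-! ### `gexp` as a finite sum -/

lemma gexp_eq_sum {F : GA d} {N : ℕ} (hF : F ^ N = 0) :
    gexp d F = ∑ k ∈ Finset.range N, (k.factorial : ℝ)⁻¹ • F ^ k := by
  apply finsum_eq_sum_of_support_subset
  intro k hk
  simp only [Function.mem_support, ne_eq] at hk
  simp only [Finset.coe_range, Set.mem_Iio]
  by_contra h
  exact hk (by rw [pow_zero_of_le' hF (le_of_not_gt h), smul_zero])



open ExteriorAlgebra CliffordAlgebra

/-! ### Killing ghost terms by `ψ_g ψ̄_g` -/

lemma P_mul_term {u v : GVtx d} (h : u = none ∨ v = none) (c : ℝ) :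
    (psi d none * psibar d none) * (c • (psi d u * psibar d v)) = 0 := by
  rw [mul_smul_comm]
  unfold psi psibar
  rcases h with rfl | rfl
  · rw [quad_mul_quad_zero d _ _ (Or.inl rfl), smul_zero]
  · rw [quad_mul_quad_zero d _ _ (Or.inr rfl), smul_zero]

lemma P_mul_pinQuad (Λ : Finset (Vtx d)) :
    (psi d none * psibar d none) * pinQuad d Λ
      = (psi d none * psibar d none) * dirQuad d Λ := by
  classical
  have hnone : (none : GVtx d) ∉ Λ.image some := by simp
  have hinj : ∀ x ∈ Λ, ∀ y ∈ Λ, (some x : GVtx d) = some y → x = y :=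
    fun x _ y _ h => Option.some.inj h
  unfold pinQuad wiredSet dirQuad
  simp only [Finset.mul_sum]
  rw [Finset.sum_insert hnone]
  rw [Finset.sum_eq_zero fun v _ => P_mul_term d (Or.inl rfl) _, zero_add]
  rw [Finset.sum_image hinj]
  refine Finset.sum_congr rfl fun u hu => ?_
  rw [Finset.sum_insert hnone, P_mul_term d (Or.inr rfl), zero_add]
  rw [Finset.sum_image hinj]
  rfl

set_option maxHeartbeats 1000000 in
lemma P_mul_pow (Λ : Finset (Vtx d)) (k : ℕ) :
    (psi d none * psibar d none) * (pinQuad d Λ + psi d none * psibar d none) ^ k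
      = (psi d none * psibar d none) * (dirQuad d Λ) ^ k := by
  set P := psi d none * psibar d none with hP
  set Qd := dirQuad d Λ with hQd
  set G := pinQuad d Λ + P - Qd with hG
  have hPG : P * G = 0 := by
    rw [hG, mul_sub, mul_add, P_mul_pinQuad d Λ, (isM2_P d).sq_zero d, add_zero, sub_self]
  have hPQd : Commute P Qd := commute_dirQuad d (isM2_P d) Λ
  have h1 : Commute Qd (pinQuad d Λ) := by
    rw [hQd, dirQuad_eq_sum]
    exact Commute.sum_left _ _ _ fun p _ => commute_pinQuad d (isM2_term d _ _ _) Λ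
  have hC : Commute Qd G := by
    rw [hG]
    exact (h1.add_right hPQd.symm).sub_right (Commute.refl Qd)
  have hsplit : pinQuad d Λ + P = Qd + G := by rw [hG]; abel
  rw [hsplit, hC.add_pow, Finset.mul_sum, Finset.sum_range_succ]
  have hlast : P * (Qd ^ k * G ^ (k - k) * ((k.choose k : ℕ) : GA d)) = P * Qd ^ k := by
    simp
  rw [hlast]
  rw [Finset.sum_eq_zero, zero_add]
  intro m hm
  have hmk : m < k := Finset.mem_range.mp hm
  have hkm : k - m = (k - m - 1) + 1 := by omega
  have hPQm : P * Qd ^ m = Qd ^ m * P := (hPQd.pow_right m).eq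
  calc P * (Qd ^ m * G ^ (k - m) * ((k.choose m : ℕ) : GA d))
      = Qd ^ m * (P * G * (G ^ (k - m - 1) * ((k.choose m : ℕ) : GA d))) := by
        rw [hkm, pow_succ']
        rw [show Qd ^ m * (G * G ^ (k - m - 1)) * ((k.choose m : ℕ) : GA d)
            = Qd ^ m * (G * (G ^ (k - m - 1) * ((k.choose m : ℕ) : GA d))) from by
          rw [mul_assoc, mul_assoc]]
        rw [← mul_assoc P, hPQm, mul_assoc, ← mul_assoc P]
        simp
    _ = 0 := by rw [hPG, zero_mul, mul_zero]

lemma P_mul_gexp (Λ : Finset (Vtx d)) :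
    (psi d none * psibar d none) * gexp d (pinQuad d Λ + psi d none * psibar d none)
      = (psi d none * psibar d none) * gexp d (dirQuad d Λ) := by
  set N₁ := (wiredSet d Λ ×ˢ wiredSet d Λ).card + 1 + 1 with hN₁
  set N₂ := (Λ ×ˢ Λ).card + 1 with hN₂
  set N := max N₁ N₂ with hN
  have h₁ : (pinQuad d Λ + psi d none * psibar d none) ^ N = 0 :=
    pow_zero_of_le' (pinP_pow_zero d Λ) (le_max_left _ _)
  have h₂ : (dirQuad d Λ) ^ N = 0 :=
    pow_zero_of_le' (dirQuad_pow_zero d Λ) (le_max_right _ _)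
  rw [gexp_eq_sum d h₁, gexp_eq_sum d h₂, Finset.mul_sum, Finset.mul_sum]
  refine Finset.sum_congr rfl fun k _ => ?_
  rw [mul_smul_comm, mul_smul_comm, P_mul_pow]



open ExteriorAlgebra CliffordAlgebra

/-! ### Leibniz rule for contractions -/

set_option maxHeartbeats 1000000 in
lemma contract_mul (φ : Module.Dual ℝ (MM d)) (x y : GA d) :
    contractLeft (Q := (0 : QuadraticForm ℝ (MM d))) φ (x * y)
      = contractLeft φ x * y + involute x * contractLeft φ y := by
  induction x using CliffordAlgebra.induction generalizing y with
  | algebraMap r =>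
    rw [contractLeft_algebraMap_mul, contractLeft_algebraMap, involute.commutes,
      zero_mul, zero_add]
  | ι m =>
    rw [contractLeft_ι_mul, contractLeft_ι, involute_ι, Algebra.smul_def,
      sub_eq_add_neg, neg_mul]
  | mul a b ha hb =>
    rw [mul_assoc, ha, hb, ha b, map_mul]
    noncomm_ring
  | add a b ha hb =>
    simp only [add_mul, map_add, ha, hb]
    abel

/-! ### Ghost-free elements -/

/-- `x` does not involve the ghost generators. -/
def GhostFree (x : GA d) : Prop :=
  der d (Sum.inl none) x = 0 ∧ der d (Sum.inr none) x = 0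

lemma der_eq (i : GVtx d ⊕ GVtx d) (x : GA d) :
    der d i x = contractLeft (Q := (0 : QuadraticForm ℝ (MM d))) (LinearMap.proj i) x := rfl

lemma GhostFree.one : GhostFree d 1 := by
  constructor <;> rw [der_eq] <;> exact contractLeft_one _ _

lemma GhostFree.mul {x y : GA d} (hx : GhostFree d x) (hy : GhostFree d y) :
    GhostFree d (x * y) := by
  constructor <;> rw [der_eq, contract_mul]
  · rw [← der_eq, hx.1, ← der_eq, hy.1, zero_mul, mul_zero, add_zero]
  · rw [← der_eq, hx.2, ← der_eq, hy.2, zero_mul, mul_zero, add_zero]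

lemma GhostFree.add {x y : GA d} (hx : GhostFree d x) (hy : GhostFree d y) :
    GhostFree d (x + y) := by
  constructor <;> rw [map_add]
  · rw [hx.1, hy.1, add_zero]
  · rw [hx.2, hy.2, add_zero]

lemma GhostFree.smul (r : ℝ) {x : GA d} (hx : GhostFree d x) :
    GhostFree d (r • x) := by
  constructor <;> rw [map_smul]
  · rw [hx.1, smul_zero]
  · rw [hx.2, smul_zero]

lemma GhostFree.sub {x y : GA d} (hx : GhostFree d x) (hy : GhostFree d y) :
    GhostFree d (x - y) := by
  constructor <;> rw [map_sub]
  · rw [hx.1, hy.1, sub_zero]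
  · rw [hx.2, hy.2, sub_zero]

lemma GhostFree.psi (u : Vtx d) : GhostFree d (psi d (some u)) := by
  unfold Sandpile.psi
  constructor <;> rw [der_eq, contractLeft_ι] <;>
    simp [LinearMap.proj_apply, Pi.single_apply]

lemma GhostFree.psibar (u : Vtx d) : GhostFree d (psibar d (some u)) := by
  unfold Sandpile.psibar
  constructor <;> rw [der_eq, contractLeft_ι] <;>
    simp [LinearMap.proj_apply, Pi.single_apply]

lemma GhostFree.sum {ι : Type*} (s : Finset ι) (f : ι → GA d)
    (h : ∀ i ∈ s, GhostFree d (f i)) : GhostFree d (∑ i ∈ s, f i) := by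
  classical
  induction s using Finset.induction_on with
  | empty => constructor <;> simp
  | insert a s ha ih =>
    rw [Finset.sum_insert ha]
    exact (h a (Finset.mem_insert_self a s)).add d
      (ih fun i hi => h i (Finset.mem_insert_of_mem hi))

lemma GhostFree.pow {x : GA d} (hx : GhostFree d x) (n : ℕ) : GhostFree d (x ^ n) := by
  induction n with
  | zero => rw [pow_zero]; exact GhostFree.one d
  | succ n ih => rw [pow_succ]; exact ih.mul d hx

lemma GhostFree.listProd (l : List (GA d)) (h : ∀ x ∈ l, GhostFree d x) :
    GhostFree d l.prod := by
  induction l with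
  | nil => exact GhostFree.one d
  | cons a l ih =>
    rw [List.prod_cons]
    exact (h a List.mem_cons_self).mul d (ih fun x hx => h x (List.mem_cons_of_mem a hx))

lemma gf_dirQuad (Λ : Finset (Vtx d)) : GhostFree d (Sandpile.dirQuad d Λ) := by
  rw [dirQuad_eq_sum]
  exact GhostFree.sum d _ _ fun p _ =>
    GhostFree.smul d _ ((GhostFree.psi d p.1).mul d (GhostFree.psibar d p.2))

lemma gf_gexp_dirQuad (Λ : Finset (Vtx d)) : GhostFree d (gexp d (Sandpile.dirQuad d Λ)) := by
  rw [gexp_eq_sum d (dirQuad_pow_zero d Λ)]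
  exact GhostFree.sum d _ _ fun k _ =>
    GhostFree.smul d _ ((gf_dirQuad d Λ).pow d k)

/-! ### Berezin integral manipulations -/

lemma der_anticomm (i j : GVtx d ⊕ GVtx d) :
    der d i * der d j = -(der d j * der d i) := by
  apply LinearMap.ext
  intro z
  rw [Module.End.mul_apply, LinearMap.neg_apply, Module.End.mul_apply]
  exact contractLeft_comm _ _ z

lemma D_commute (u v : GVtx d) : Commute (D d u) (D d v) :=
  pair_comm' (der_anticomm d _ _) (der_anticomm d _ _) (der_anticomm d _ _)
    (der_anticomm d _ _)

lemma berezin_insert (a : GVtx d) (S : Finset (GVtx d)) (h : a ∉ S) :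
    berezin d (insert a S) = berezin d S * D d a := by
  unfold berezin
  have hperm : List.Perm ((insert a S).toList.map (D d)) ((a :: S.toList).map (D d)) :=
    (Finset.toList_insert h).map _
  have hpw : ((insert a S).toList.map (D d)).Pairwise Commute := by
    apply List.pairwise_of_forall_mem_list
    intro x hx y hy
    simp only [List.mem_map] at hx hy
    obtain ⟨u, -, rfl⟩ := hx
    obtain ⟨v, -, rfl⟩ := hy
    exact D_commute d u v
  rw [hperm.prod_eq' hpw, List.map_cons, List.prod_cons]
  refine (Commute.list_prod_right _ _ fun x hx => ?_).eq
  simp only [List.mem_map] at hx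
  obtain ⟨u, -, rfl⟩ := hx
  exact D_commute d a u

lemma D_none_P_mul (X : GA d) (hX : GhostFree d X) :
    D d none (psi d none * psibar d none * X) = X := by
  have hL : der d (Sum.inl none) (psi d none * psibar d none * X) = psibar d none * X := by
    rw [mul_assoc, der_eq]
    unfold Sandpile.psi Sandpile.psibar
    rw [contractLeft_ι_mul, contractLeft_ι_mul]
    rw [show contractLeft (Q := (0 : QuadraticForm ℝ (MM d)))
        (LinearMap.proj (Sum.inl (none : GVtx d))) X = 0 from hX.1]
    simp [LinearMap.proj_apply, Pi.single_apply]
  show (der d (Sum.inr none) * der d (Sum.inl none)) _ = X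
  rw [Module.End.mul_apply, hL, der_eq]
  unfold Sandpile.psibar
  rw [contractLeft_ι_mul]
  rw [show contractLeft (Q := (0 : QuadraticForm ℝ (MM d)))
      (LinearMap.proj (Sum.inr (none : GVtx d))) X = 0 from hX.2]
  simp [LinearMap.proj_apply, Pi.single_apply]


/-- **Corollary 4.2 of the paper**: the pinned and Dirichlet unnormalized fGFF states
agree on products of gradient observables
`∏_{j=1}^k ∇_{η(v_j)}ψ(v_j) ∇_{η'(v_j)}ψ̄(v_j)` with `v_j ∈ Λ^in`, `η(v_j), η'(v_j) ∈ E_o`.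
(The factors are even, hence commute; the product is taken in the order `j = 1,…,k`.) -/
theorem pstate_eq_dstate_gradients (hd : 2 ≤ d) (Λ : Finset (Vtx d)) (k : ℕ)
    (v : Fin k → Vtx d) (hv : ∀ j, v j ∈ interior d Λ)
    (η η' : Fin k → Vtx d) (hη : ∀ j, η j ∈ Eo d) (hη' : ∀ j, η' j ∈ Eo d) :
    pstate d Λ
        (((List.finRange k).map fun j =>
            gradPsi d (v j) (η j) * gradPsibar d (v j) (η' j)).prod) =
      dstate d Λ
        (((List.finRange k).map fun j =>
            gradPsi d (v j) (η j) * gradPsibar d (v j) (η' j)).prod) := by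
  classical
  set F := ((List.finRange k).map fun j =>
      gradPsi d (v j) (η j) * gradPsibar d (v j) (η' j)).prod with hFdef
  have hGFF : GhostFree d F := by
    apply GhostFree.listProd
    intro x hx
    simp only [List.mem_map] at hx
    obtain ⟨j, -, rfl⟩ := hx
    unfold gradPsi gradPsibar
    exact ((GhostFree.psi d _).sub d (GhostFree.psi d _)).mul d
      ((GhostFree.psibar d _).sub d (GhostFree.psibar d _))
  have hX : GhostFree d (gexp d (dirQuad d Λ) * F) := (gf_gexp_dirQuad d Λ).mul d hGFF
  unfold pstate dstate
  rw [show psi d none * psibar d none *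
        gexp d (pinQuad d Λ + psi d none * psibar d none) * F
      = psi d none * psibar d none * (gexp d (dirQuad d Λ) * F) from by
    rw [P_mul_gexp d Λ, mul_assoc]]
  rw [show wiredSet d Λ = insert none (Λ.image some) from rfl]
  rw [berezin_insert d none _ (by simp)]
  rw [Module.End.mul_apply, D_none_P_mul d _ hX]

end Sandpile
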